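/- Fix natural numbers m ≥ 1 and J ≥ 1, integers j₁ ≤ j₂, reals α > 0 and β > 0, and positive reals y_{j₁}, …, y_{j₂}; set b = 2^{mJ}, c = j₂ − j₁ + 1, S(H) = ∑_{j=j₁}^{j₂} y_j·2^{(2H+m)j}, and s*(H) = b·S(H)/(b·c + 2). Define the profiled log posterior φ(H) = lnF(H, s*(H)) for H ∈ (0,1). Then φ is differentiable on (0,1) with derivative φ'(H) = −(b·c + 2)·ln 2·( ∑_{j=j₁}^{j₂} j·y_j·2^{(2H+m)j} ) / S(H) + b·ln 2·∑_{j=j₁}^{j₂} j + (α−1)/H − (β−1)/(1−H). -/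

import Mathlib

/-!
At the profiled scale `s*(H) = b·S(H)/(bc+2)` the data-fit term `b·S(H)/(2 s*(H))` is the constant
`(bc+2)/2`, so `φ(H)` is `-(bc+2)/2 · ln S(H)` plus a function of `H` that is affine apart from the
beta log-prior. Differentiating `S` termwise through `d/dH 2^{(2H+m)j} = 2 j ln 2 · 2^{(2H+m)j}` gives
the formula.
-/

open Finset

/-- The log non-normalized posterior `ln F(H, s)` for the Bayesian wavelet-based
estimation of the Hurst exponent, with `b = 2^{mJ}`, `c = j₂ - j₁ + 1`,
a `beta(α, β)` prior on `H` and the non-informative prior `1/σ²` on `σ²`. -/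
noncomputable def lnF (m J : ℕ) (j₁ j₂ : ℤ) (α β : ℝ) (y : ℤ → ℝ) (H s : ℝ) : ℝ :=
  -((((2 : ℝ) ^ (m * J)) * ((j₂ - j₁ + 1 : ℤ) : ℝ) + 2) / 2) * Real.log s +
    (∑ j ∈ Finset.Icc j₁ j₂,
      (((2 * H + (m : ℝ)) * (j : ℝ) * ((2 : ℝ) ^ (m * J)) / 2) * Real.log 2 +
        (((2 : ℝ) ^ (m * J) - 2) / 2) * Real.log (y j))) -
    (((2 : ℝ) ^ (m * J)) / (2 * s)) *
      (∑ j ∈ Finset.Icc j₁ j₂, y j * (2 : ℝ) ^ ((2 * H + (m : ℝ)) * (j : ℝ))) +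
    Real.log (Real.Gamma (α + β)) - Real.log (Real.Gamma α) - Real.log (Real.Gamma β) +
    (α - 1) * Real.log H + (β - 1) * Real.log (1 - H) -
    ((j₂ - j₁ + 1 : ℤ) : ℝ) * Real.log (Real.Gamma ((2 : ℝ) ^ (m * J) / 2)) +
    (((2 : ℝ) ^ (m * J)) * ((j₂ - j₁ + 1 : ℤ) : ℝ) / 2) *
      Real.log ((2 : ℝ) ^ (m * J) / 2)

open Real

theorem hasDerivAt_const_rpow_affine_mul {a : ℝ} (ha : 0 < a) (p q k x : ℝ) :
    HasDerivAt (fun t => a ^ ((p * t + q) * k)) (p * k * log a * a ^ ((p * x + q) * k)) x := by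
  have hlin : HasDerivAt (fun t => (p * t + q) * k) (p * k) x := by
    simpa using (((hasDerivAt_id x).const_mul p).add_const q).mul_const k
  exact ((hasStrictDerivAt_const_rpow ha _).hasDerivAt.comp x hlin).congr_deriv (by ring)

theorem hasDerivAt_sum_mul_const_rpow_affine {ι : Type*} (s : Finset ι) (w k : ι → ℝ) {a : ℝ}
    (ha : 0 < a) (p q x : ℝ) :
    HasDerivAt (fun t => ∑ i ∈ s, w i * a ^ ((p * t + q) * k i))
      (p * log a * ∑ i ∈ s, k i * w i * a ^ ((p * x + q) * k i)) x := by
  rw [mul_sum]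
  refine HasDerivAt.fun_sum fun i _ => ?_
  exact ((hasDerivAt_const_rpow_affine_mul ha p q (k i) x).const_mul (w i)).congr_deriv (by ring)

theorem sum_mul_rpow_pos {ι : Type*} {s : Finset ι} {w : ι → ℝ} (hs : s.Nonempty)
    (hw : ∀ i ∈ s, 0 < w i) {a : ℝ} (ha : 0 < a) (e : ι → ℝ) :
    0 < ∑ i ∈ s, w i * a ^ e i :=
  sum_pos (fun i hi => mul_pos (hw i hi) (rpow_pos_of_pos ha _)) hs

theorem div_two_mul_div_mul_self {b S : ℝ} (hb : b ≠ 0) (hS : S ≠ 0) (N : ℝ) :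
    b / (2 * (b * S / N)) * S = N / 2 := by
  rcases eq_or_ne N 0 with rfl | hN
  · simp
  · field_simp

theorem hasDerivAt_profiled_lnF_general
    (m J : ℕ) (j₁ j₂ : ℤ) (hj : j₁ ≤ j₂)
    (α β : ℝ)
    (y : ℤ → ℝ) (hy : ∀ j ∈ Finset.Icc j₁ j₂, 0 < y j)
    (H : ℝ) (hH : H ∈ Set.Ioo (0 : ℝ) 1) :
    HasDerivAt
      (fun t => lnF m J j₁ j₂ α β y t
        (((2 : ℝ) ^ (m * J)) *
            (∑ j ∈ Finset.Icc j₁ j₂, y j * (2 : ℝ) ^ ((2 * t + (m : ℝ)) * (j : ℝ))) /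
          (((2 : ℝ) ^ (m * J)) * ((j₂ - j₁ + 1 : ℤ) : ℝ) + 2)))
      (-((((2 : ℝ) ^ (m * J)) * ((j₂ - j₁ + 1 : ℤ) : ℝ) + 2)) * Real.log 2 *
          (∑ j ∈ Finset.Icc j₁ j₂,
            (j : ℝ) * y j * (2 : ℝ) ^ ((2 * H + (m : ℝ)) * (j : ℝ))) /
          (∑ j ∈ Finset.Icc j₁ j₂, y j * (2 : ℝ) ^ ((2 * H + (m : ℝ)) * (j : ℝ))) +
        ((2 : ℝ) ^ (m * J)) * Real.log 2 * (∑ j ∈ Finset.Icc j₁ j₂, (j : ℝ)) +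
        (α - 1) / H - (β - 1) / (1 - H)) H := by
  obtain ⟨hH0, hH1⟩ := hH
  simp only [lnF]
  set b : ℝ := 2 ^ (m * J)
  set N : ℝ := b * ((j₂ - j₁ + 1 : ℤ) : ℝ) + 2
  have hb : 0 < b := by positivity
  have hN : 0 < N := by
    have : (0 : ℝ) < ((j₂ - j₁ + 1 : ℤ) : ℝ) := by exact_mod_cast (by omega : (0 : ℤ) < j₂ - j₁ + 1)
    positivity
  have hS_pos (t : ℝ) : 0 < ∑ j ∈ Icc j₁ j₂, y j * (2 : ℝ) ^ ((2 * t + m) * j) :=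
    sum_mul_rpow_pos (nonempty_Icc.2 hj) hy two_pos _
  have hS := hasDerivAt_sum_mul_const_rpow_affine (Icc j₁ j₂) y (fun j : ℤ => (j : ℝ)) two_pos 2 m H
  have hlogS := ((hS.const_mul b).div_const N).log (by have := hS_pos H; positivity)
  have hlin : HasDerivAt
      (fun t => ∑ j ∈ Icc j₁ j₂, ((2 * t + m) * j * b / 2 * log 2 + (b - 2) / 2 * log (y j)))
      ((∑ j ∈ Icc j₁ j₂, (j : ℝ)) * (b * log 2)) H := by
    rw [sum_mul]
    refine HasDerivAt.fun_sum fun j _ => ?_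
    convert (((((hasDerivAt_id H).const_mul 2).add_const (m : ℝ)).mul_const (j : ℝ)).mul_const
      (b / 2 * log 2)).add_const ((b - 2) / 2 * log (y j)) using 1
    · ext t; simp only [id]; ring
    · ring
  simp only [div_two_mul_div_mul_self hb.ne' (hS_pos _).ne']
  refine ((((hlogS.const_mul (-(N / 2))).add hlin).sub_const _).add_const _ |>.sub_const _
    |>.sub_const _ |>.add ((hasDerivAt_log hH0.ne').const_mul (α - 1))
    |>.add ((((hasDerivAt_id H).const_sub 1).log (sub_pos.2 hH1).ne').const_mul (β - 1))
    |>.sub_const _ |>.add_const _).congr_deriv ?_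
  have hS0 := (hS_pos H).ne'
  generalize (∑ j ∈ Icc j₁ j₂, y j * (2 : ℝ) ^ ((2 * H + m) * j)) = S at hS0 ⊢
  generalize (∑ j ∈ Icc j₁ j₂, (j : ℝ) * y j * (2 : ℝ) ^ ((2 * H + m) * j)) = A
  simp only [id]
  field_simp
  ring

/-- The profiled log posterior `φ(H) = lnF(H, s*(H))` with
`s*(H) = b·S(H)/(bc+2)` is differentiable on `(0,1)`, with derivative
`φ'(H) = -(bc+2)·ln2·(∑_j j y_j 2^{(2H+m)j})/S(H) + b·ln2·∑_j j + (α-1)/H - (β-1)/(1-H)`. -/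
theorem hasDerivAt_profiled_lnF
    (m J : ℕ) (hm : 1 ≤ m) (hJ : 1 ≤ J) (j₁ j₂ : ℤ) (hj : j₁ ≤ j₂)
    (α β : ℝ) (hα : 0 < α) (hβ : 0 < β)
    (y : ℤ → ℝ) (hy : ∀ j ∈ Finset.Icc j₁ j₂, 0 < y j)
    (H : ℝ) (hH : H ∈ Set.Ioo (0 : ℝ) 1) :
    HasDerivAt
      (fun t => lnF m J j₁ j₂ α β y t
        (((2 : ℝ) ^ (m * J)) *
            (∑ j ∈ Finset.Icc j₁ j₂, y j * (2 : ℝ) ^ ((2 * t + (m : ℝ)) * (j : ℝ))) /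
          (((2 : ℝ) ^ (m * J)) * ((j₂ - j₁ + 1 : ℤ) : ℝ) + 2)))
      (-((((2 : ℝ) ^ (m * J)) * ((j₂ - j₁ + 1 : ℤ) : ℝ) + 2)) * Real.log 2 *
          (∑ j ∈ Finset.Icc j₁ j₂,
            (j : ℝ) * y j * (2 : ℝ) ^ ((2 * H + (m : ℝ)) * (j : ℝ))) /
          (∑ j ∈ Finset.Icc j₁ j₂, y j * (2 : ℝ) ^ ((2 * H + (m : ℝ)) * (j : ℝ))) +
        ((2 : ℝ) ^ (m * J)) * Real.log 2 * (∑ j ∈ Finset.Icc j₁ j₂, (j : ℝ)) +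
        (α - 1) / H - (β - 1) / (1 - H)) H :=
  hasDerivAt_profiled_lnF_general m J j₁ j₂ hj α β y hy H hH
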